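/- arXiv:2401.06472 — 2 statements merged into one kernel-verified Lean document; each statement's English description precedes it below -/
import Mathlib

section
/- (Theorem 1, ≤ direction for two sequential projective measurements) Let ρ be a density operator on finite-dimensional H_S with purification |ψ_SE⟩ ∈ H_S ⊗ H_E, and let {Π₁^{b₁}}, {Π₂^{b₂}} be projective measurements on H_S. For any POVM {Π_E^{(b₁,b₂)}} on H_E, Σ_{b₁,b₂} ⟨ψ_SE| (Π₁^{b₁}Π₂^{b₂}Π₁^{b₁}) ⊗ Π_E^{(b₁,b₂)} |ψ_SE⟩ ≤ max over ensemble decompositions ρ = Σ_λ p(λ)|φ_λ⟩⟨φ_λ| of Σ_λ p(λ) max_{b₁,b₂} ⟨φ_λ|Π₁^{b₁}Π₂^{b₂}Π₁^{b₁}|φ_λ⟩. -/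
/-!
Write each POVM element of Eve as a sum of rank-one terms `|v⟩⟨v|`. Contracting the purification
with `⟨v|` on the environment leaves an unnormalised state `w_v` on the system. Since the
rank-one terms sum to the identity, the `w_v` decompose `ρ` and their squared norms sum to one;
moreover Eve's guessing probability is `Σ_v ⟨w_v, A_{b(v)} w_v⟩`, where `b(v)` is the outcome the
term belongs to. Normalising, each summand is `‖w_v‖²` times the expectation of `A_{b(v)}` in a
pure state, which is at most `‖w_v‖²` times the best guess for that state.
-/

open Matrix Kronecker
open scoped ComplexOrder

noncomputable def ptraceE {dS dE : ℕ}
    (M : Matrix (Fin dS × Fin dE) (Fin dS × Fin dE) ℂ) : Matrix (Fin dS) (Fin dS) ℂ :=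
  fun i j => ∑ k, M (i, k) (j, k)

theorem kronecker_sum {l m n p ι α : Type*} [CommSemiring α] (A : Matrix l m α)
    (s : Finset ι) (B : ι → Matrix n p α) :
    A ⊗ₖ ∑ i ∈ s, B i = ∑ i ∈ s, A ⊗ₖ B i :=
  map_sum (kroneckerBilinear (R := α) A) B s

section Steering

variable {S E : Type*} [Fintype E]

/-- The unnormalised state `(1 ⊗ ⟨u|) ψ` left on `S` when the environment is found in `u`. -/
noncomputable def steeredState (ψ : S × E → ℂ) (u : E → ℂ) : S → ℂ :=
  of (Function.curry ψ) *ᵥ star u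

theorem star_dotProduct_kronecker_vecMulVec_mulVec [Fintype S] (ψ : S × E → ℂ)
    (A : Matrix S S ℂ) (u : E → ℂ) :
    star ψ ⬝ᵥ ((A ⊗ₖ vecMulVec u (star u)) *ᵥ ψ)
      = star (steeredState ψ u) ⬝ᵥ (A *ᵥ steeredState ψ u) := by
  simp only [steeredState, dotProduct, mulVec, Fintype.sum_prod_type, kroneckerMap_apply,
    vecMulVec_apply, Pi.star_apply, of_apply, Function.curry_apply, star_sum, star_mul',
    star_star, Finset.mul_sum, Finset.sum_mul]
  refine Finset.sum_congr rfl fun i _ => ?_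
  rw [Finset.sum_comm]
  refine Finset.sum_congr rfl fun k _ => ?_
  rw [Finset.sum_comm]
  exact Finset.sum_congr rfl fun j _ => Finset.sum_congr rfl fun k' _ => by ring

theorem vecMulVec_steeredState (ψ : S × E → ℂ) (u : E → ℂ) :
    vecMulVec (steeredState ψ u) (star (steeredState ψ u))
      = of (Function.curry ψ) * vecMulVec (star u) u * (of (Function.curry ψ))ᴴ := by
  rw [steeredState, star_mulVec, mul_vecMulVec, vecMulVec_mul, star_star]

theorem sum_vecMulVec_steeredState [DecidableEq E] {ι : Type*} [Fintype ι] (ψ : S × E → ℂ)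
    (u : ι → E → ℂ) (hu : ∑ x, vecMulVec (u x) (star (u x)) = 1) :
    ∑ x, vecMulVec (steeredState ψ (u x)) (star (steeredState ψ (u x)))
      = of (Function.curry ψ) * (of (Function.curry ψ))ᴴ := by
  have hu' := congrArg transpose hu
  rw [transpose_sum, transpose_one] at hu'
  simp only [transpose_vecMulVec] at hu'
  rw [Finset.sum_congr rfl fun x _ => vecMulVec_steeredState ψ (u x)]
  rw [← Matrix.sum_mul, ← Matrix.mul_sum, hu', Matrix.mul_one]

theorem sum_sigma_star_steeredState_dotProduct_mulVec [Fintype S] {β : Type*} {κ : β → Type*}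
    [Fintype β] [∀ b, Fintype (κ b)] (ψ : S × E → ℂ) (v : ∀ b, κ b → E → ℂ)
    (A : β → Matrix S S ℂ) :
    ∑ x : Σ b, κ b,
        star (steeredState ψ (v x.1 x.2)) ⬝ᵥ (A x.1 *ᵥ steeredState ψ (v x.1 x.2))
      = ∑ b, star ψ ⬝ᵥ ((A b ⊗ₖ ∑ i, vecMulVec (v b i) (star (v b i))) *ᵥ ψ) := by
  simp_rw [kronecker_sum, sum_mulVec, dotProduct_sum, star_dotProduct_kronecker_vecMulVec_mulVec]
  exact Fintype.sum_sigma _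

end Steering

theorem ptraceE_vecMulVec_star {dS dE : ℕ} (ψ : Fin dS × Fin dE → ℂ) :
    ptraceE (vecMulVec ψ (star ψ)) = of (Function.curry ψ) * (of (Function.curry ψ))ᴴ := by
  ext i j
  simp [ptraceE, mul_apply, vecMulVec_apply]

section Ensemble

variable {S : Type*} [Fintype S]

theorem ofReal_re_star_dotProduct_self (v : S → ℂ) :
    (((star v ⬝ᵥ v).re : ℝ) : ℂ) = star v ⬝ᵥ v :=
  (Complex.eq_re_of_ofReal_le (r := 0) (by simp [dotProduct_star_self_nonneg v])).symm

theorem exists_unit_smul_eq [Nonempty S] (v : S → ℂ) :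
    ∃ φ : S → ℂ, star φ ⬝ᵥ φ = 1 ∧ v = ((√(star v ⬝ᵥ v).re : ℝ) : ℂ) • φ := by
  classical
  by_cases hv : v = 0
  · obtain ⟨i⟩ := ‹Nonempty S›
    exact ⟨Pi.single i 1, by simp [dotProduct, Pi.single_apply], by simp [hv]⟩
  set c : ℝ := √(star v ⬝ᵥ v).re
  have hcc : (c : ℂ) * c = star v ⬝ᵥ v := by
    rw [← Complex.ofReal_mul,
      Real.mul_self_sqrt (Complex.nonneg_iff.mp (dotProduct_star_self_nonneg v)).1,
      ofReal_re_star_dotProduct_self]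
  have hc : (c : ℂ) ≠ 0 := by
    intro h
    rw [h, zero_mul, eq_comm, dotProduct_star_self_eq_zero] at hcc
    exact hv hcc
  refine ⟨(c : ℂ)⁻¹ • v, ?_, by rw [smul_smul, mul_inv_cancel₀ hc, one_smul]⟩
  rw [star_smul, smul_dotProduct, dotProduct_smul, ← hcc, smul_eq_mul, smul_eq_mul,
    RCLike.star_def, map_inv₀, Complex.conj_ofReal]
  field_simp

theorem vecMulVec_ofReal_smul (c : ℝ) (φ : S → ℂ) :
    vecMulVec ((c : ℂ) • φ) (star ((c : ℂ) • φ)) = ((c ^ 2 : ℝ) : ℂ) • vecMulVec φ (star φ) := by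
  rw [star_smul, Complex.star_def, Complex.conj_ofReal, smul_vecMulVec, vecMulVec_smul, smul_smul]
  push_cast
  ring_nf

theorem star_ofReal_smul_dotProduct_mulVec (c : ℝ) (φ : S → ℂ) (A : Matrix S S ℂ) :
    star ((c : ℂ) • φ) ⬝ᵥ (A *ᵥ ((c : ℂ) • φ)) = ((c ^ 2 : ℝ) : ℂ) * (star φ ⬝ᵥ (A *ᵥ φ)) := by
  rw [star_smul, Complex.star_def, Complex.conj_ofReal, mulVec_smul, smul_dotProduct,
    dotProduct_smul, smul_eq_mul, smul_eq_mul]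
  push_cast
  ring

theorem exists_ensemble_le_sum_sup' {ι β : Type*} [Fintype ι] [Fintype β]
    (hβ : (Finset.univ : Finset β).Nonempty) (w : ι → S → ℂ)
    (hw : ∑ x, star (w x) ⬝ᵥ w x = 1) (A : β → Matrix S S ℂ) (g : ι → β) :
    ∃ (L : ℕ) (p : Fin L → ℝ) (φ : Fin L → S → ℂ),
      (∀ l, 0 ≤ p l) ∧ (∑ l, p l = 1) ∧ (∀ l, star (φ l) ⬝ᵥ φ l = 1) ∧
      ∑ x, vecMulVec (w x) (star (w x)) = ∑ l, (p l : ℂ) • vecMulVec (φ l) (star (φ l)) ∧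
      (∑ x, star (w x) ⬝ᵥ (A (g x) *ᵥ w x)).re
        ≤ ∑ l, p l * Finset.univ.sup' hβ (fun b => (star (φ l) ⬝ᵥ (A b *ᵥ φ l)).re) := by
  have : Nonempty S := by
    by_contra h
    rw [not_nonempty_iff] at h
    simp [dotProduct] at hw
  choose φ hφ hwφ using fun x => exists_unit_smul_eq (w x)
  let p : ι → ℝ := fun x => (star (w x) ⬝ᵥ w x).re
  have hp : ∀ x, 0 ≤ p x := fun x => (Complex.nonneg_iff.mp (dotProduct_star_self_nonneg _)).1
  have hsq : ∀ x, √(p x) ^ 2 = p x := fun x => Real.sq_sqrt (hp x)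
  have hdecomp : ∀ x,
      vecMulVec (w x) (star (w x)) = (p x : ℂ) • vecMulVec (φ x) (star (φ x)) := fun x => by
    conv_lhs => rw [hwφ x, vecMulVec_ofReal_smul, hsq]
  have hexp : ∀ x (M : Matrix S S ℂ),
      (star (w x) ⬝ᵥ (M *ᵥ w x)).re = p x * (star (φ x) ⬝ᵥ (M *ᵥ φ x)).re := fun x M => by
    conv_lhs => rw [hwφ x, star_ofReal_smul_dotProduct_mulVec, hsq, Complex.re_ofReal_mul]
  let e := (Fintype.equivFin ι).symm
  refine ⟨Fintype.card ι, fun l => p (e l), fun l => φ (e l), fun l => hp _, ?_,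
    fun l => hφ _, ?_, ?_⟩
  · rw [Equiv.sum_comp e p, ← Complex.re_sum, hw, Complex.one_re]
  · rw [Equiv.sum_comp e (fun x => (p x : ℂ) • vecMulVec (φ x) (star (φ x)))]
    exact Finset.sum_congr rfl fun x _ => hdecomp x
  · calc (∑ x, star (w x) ⬝ᵥ (A (g x) *ᵥ w x)).re
        = ∑ x, p x * (star (φ x) ⬝ᵥ (A (g x) *ᵥ φ x)).re := by
          rw [Complex.re_sum]
          exact Finset.sum_congr rfl fun x _ => hexp x _
      _ ≤ ∑ x, p x * Finset.univ.sup' hβ (fun b => (star (φ x) ⬝ᵥ (A b *ᵥ φ x)).re) :=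
          Finset.sum_le_sum fun x _ => mul_le_mul_of_nonneg_left
            (Finset.le_sup' (fun b => (star (φ x) ⬝ᵥ (A b *ᵥ φ x)).re) (Finset.mem_univ _))
            (hp x)
      _ = _ := (Equiv.sum_comp e _).symm

end Ensemble

theorem stmt5_general (dS dE k₁ k₂ : ℕ) (hk₁ : 0 < k₁) (hk₂ : 0 < k₂)
    (ρ : Matrix (Fin dS) (Fin dS) ℂ)
    (ψSE : Fin dS × Fin dE → ℂ) (hunit : star ψSE ⬝ᵥ ψSE = 1)
    (hpur : ptraceE (vecMulVec ψSE (star ψSE)) = ρ)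
    (P1 : Fin k₁ → Matrix (Fin dS) (Fin dS) ℂ)
    (P2 : Fin k₂ → Matrix (Fin dS) (Fin dS) ℂ)
    (PE : Fin k₁ × Fin k₂ → Matrix (Fin dE) (Fin dE) ℂ)
    (hPEpos : ∀ b, (PE b).PosSemidef) (hPEsum : ∑ b, PE b = 1) :
    ∃ (L : ℕ) (p : Fin L → ℝ) (φ : Fin L → Fin dS → ℂ),
      (∀ l, 0 ≤ p l) ∧ (∑ l, p l = 1) ∧ (∀ l, star (φ l) ⬝ᵥ φ l = 1) ∧
      ρ = ∑ l, (p l : ℂ) • vecMulVec (φ l) (star (φ l)) ∧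
      (∑ b : Fin k₁ × Fin k₂,
          star ψSE ⬝ᵥ (((P1 b.1 * P2 b.2 * P1 b.1) ⊗ₖ PE b) *ᵥ ψSE)).re
        ≤ ∑ l, p l * Finset.univ.sup'
            (Finset.univ_nonempty_iff.mpr ⟨(⟨0, hk₁⟩, ⟨0, hk₂⟩)⟩)
            (fun b : Fin k₁ × Fin k₂ =>
              (star (φ l) ⬝ᵥ ((P1 b.1 * P2 b.2 * P1 b.1) *ᵥ φ l)).re) := by
  choose m v hv using fun b => posSemidef_iff_eq_sum_vecMulVec.mp (hPEpos b)
  set w : (Σ b, Fin (m b)) → Fin dS → ℂ := fun x => steeredState ψSE (v x.1 x.2)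
  have hguess : ∀ A : Fin k₁ × Fin k₂ → Matrix (Fin dS) (Fin dS) ℂ,
      ∑ b, star ψSE ⬝ᵥ ((A b ⊗ₖ PE b) *ᵥ ψSE) = ∑ x, star (w x) ⬝ᵥ (A x.1 *ᵥ w x) := by
    intro A
    simp_rw [hv]
    exact (sum_sigma_star_steeredState_dotProduct_mulVec ψSE v A).symm
  have hnorm : ∑ x, star (w x) ⬝ᵥ w x = 1 := by
    have h := hguess 1
    simp only [Pi.one_apply, one_mulVec] at h
    rw [← h, ← dotProduct_sum, ← sum_mulVec, ← kronecker_sum, hPEsum, one_kronecker_one,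
      one_mulVec, hunit]
  have hρ : ρ = ∑ x, vecMulVec (w x) (star (w x)) := by
    have hv1 : ∑ x : Σ b, Fin (m b), vecMulVec (v x.1 x.2) (star (v x.1 x.2)) = 1 := by
      rw [Fintype.sum_sigma]
      simp_rw [← hv]
      exact hPEsum
    rw [← hpur, ptraceE_vecMulVec_star]
    exact (sum_vecMulVec_steeredState ψSE _ hv1).symm
  obtain ⟨L, p, φ, hp, hp1, hφ, hdecomp, hle⟩ := exists_ensemble_le_sum_sup' _ w hnorm
    (fun b => P1 b.1 * P2 b.2 * P1 b.1) Sigma.fst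
  exact ⟨L, p, φ, hp, hp1, hφ, hρ.trans hdecomp, hguess _ ▸ hle⟩

/-- Theorem 1, ≤ direction, two sequential projective measurements:
for any POVM {Π_E^{(b₁,b₂)}} on H_E, Eve's quantum guessing probability
Σ_{b₁,b₂} ⟨ψ_SE|(Π₁^{b₁}Π₂^{b₂}Π₁^{b₁}) ⊗ Π_E^{(b₁,b₂)}|ψ_SE⟩ is at most the
classical guessing probability for some pure-state ensemble decomposition of ρ. -/
theorem stmt5 (dS dE k₁ k₂ : ℕ) (hk₁ : 0 < k₁) (hk₂ : 0 < k₂)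
    (ρ : Matrix (Fin dS) (Fin dS) ℂ)
    (ψSE : Fin dS × Fin dE → ℂ) (hunit : star ψSE ⬝ᵥ ψSE = 1)
    (hpur : ptraceE (vecMulVec ψSE (star ψSE)) = ρ)
    (P1 : Fin k₁ → Matrix (Fin dS) (Fin dS) ℂ)
    (P2 : Fin k₂ → Matrix (Fin dS) (Fin dS) ℂ)
    (h1herm : ∀ b, (P1 b).IsHermitian) (h1idem : ∀ b, P1 b * P1 b = P1 b)
    (h1orth : ∀ b b', b ≠ b' → P1 b * P1 b' = 0) (h1sum : ∑ b, P1 b = 1)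
    (h2herm : ∀ b, (P2 b).IsHermitian) (h2idem : ∀ b, P2 b * P2 b = P2 b)
    (h2orth : ∀ b b', b ≠ b' → P2 b * P2 b' = 0) (h2sum : ∑ b, P2 b = 1)
    (PE : Fin k₁ × Fin k₂ → Matrix (Fin dE) (Fin dE) ℂ)
    (hPEpos : ∀ b, (PE b).PosSemidef) (hPEsum : ∑ b, PE b = 1) :
    ∃ (L : ℕ) (p : Fin L → ℝ) (φ : Fin L → Fin dS → ℂ),
      (∀ l, 0 ≤ p l) ∧ (∑ l, p l = 1) ∧ (∀ l, star (φ l) ⬝ᵥ φ l = 1) ∧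
      ρ = ∑ l, (p l : ℂ) • vecMulVec (φ l) (star (φ l)) ∧
      (∑ b : Fin k₁ × Fin k₂,
          star ψSE ⬝ᵥ (((P1 b.1 * P2 b.2 * P1 b.1) ⊗ₖ PE b) *ᵥ ψSE)).re
        ≤ ∑ l, p l * Finset.univ.sup'
            (Finset.univ_nonempty_iff.mpr ⟨(⟨0, hk₁⟩, ⟨0, hk₂⟩)⟩)
            (fun b : Fin k₁ × Fin k₂ =>
              (star (φ l) ⬝ᵥ ((P1 b.1 * P2 b.2 * P1 b.1) *ᵥ φ l)).re) :=
  stmt5_general dS dE k₁ k₂ hk₁ hk₂ ρ ψSE hunit hpur P1 P2 PE hPEpos hPEsum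
end

section
/- For the maximally entangled two-qutrit state |ψ_MES⟩ = (|00⟩+|11⟩+|22⟩)/√3 and the CGLMP measurement bases |k⟩_{A_x} = (1/√3)Σ_{j=0}^{2} exp((2πi/3) j(k+α_x))|j⟩ with α₀=0, α₁=1/2, and |l⟩_{B_y} = (1/√3)Σ_{j=0}^{2} exp((2πi/3) j(−l+β_y))|j⟩ with β₀=1/4, β₁=−1/4, where Bob's measurement elements are the noisy operators E^l_{B_y} = ε|l⟩_{B_y}⟨l| + ((1−ε)/3)I₃, the CGLMP expression I₃ evaluates to (4/9)(3+2√3)ε. -/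
/-!
For the maximally entangled state, `⟨ψ| A ⊗ B |ψ⟩ = (1/3) Σᵢₖ Aᵢₖ Bᵢₖ`. With `A = |u⟩⟨u|` and
Bob's noisy element this gives `P(a,b|x,y) = (1 - ε)/9 + (ε/3) |Σⱼ uⱼ vⱼ|²`, and the overlap of
the two CGLMP phase vectors is `(1 + w + w²)/3` with `w = exp (2πiθ/3)`, `θ = a + α_x - b + β_y`.
Hence `P(a,b|x,y) = (1 - ε)/9 + (ε/27) f(θ)`, where
`f(θ) = |1 + w + w²|² = 3 + 4 cos(2πθ/3) + 2 cos(4πθ/3)`.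
Since `f` is even and `3`-periodic, each of the eight CGLMP terms is `(1 - ε)/3 + (ε/9) f(θ)` with
`θ ≡ ±1/4 (mod 3)` for the four positive terms and `θ ≡ ±3/4` for the negative ones, and
`f(1/4) = 4 + 2√3`, `f(3/4) = 1`.
-/

open Matrix Kronecker

noncomputable section

/-- Alice's CGLMP phases α₀ = 0, α₁ = 1/2. -/
def alphaA : Fin 2 → ℝ := ![0, 1/2]

/-- Bob's CGLMP phases β₀ = 1/4, β₁ = -1/4. -/
def betaB : Fin 2 → ℝ := ![1/4, -1/4]

/-- Alice's CGLMP basis vector |k⟩_{A_x}. -/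
def ketA (x : Fin 2) (k : Fin 3) : Fin 3 → ℂ :=
  fun j => ((1 / Real.sqrt 3 : ℝ) : ℂ) *
    Complex.exp (2 * (Real.pi : ℂ) * Complex.I / 3 * (j.val : ℂ) *
      (((k.val : ℝ) + alphaA x : ℝ) : ℂ))

/-- Bob's CGLMP basis vector |l⟩_{B_y}. -/
def ketB (y : Fin 2) (l : Fin 3) : Fin 3 → ℂ :=
  fun j => ((1 / Real.sqrt 3 : ℝ) : ℂ) *
    Complex.exp (2 * (Real.pi : ℂ) * Complex.I / 3 * (j.val : ℂ) *
      ((-(l.val : ℝ) + betaB y : ℝ) : ℂ))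

/-- Bob's noisy measurement element E^l_{B_y} = ε|l⟩_{B_y}⟨l| + ((1-ε)/3)I₃. -/
def Emeas (ε : ℝ) (y : Fin 2) (l : Fin 3) : Matrix (Fin 3) (Fin 3) ℂ :=
  (ε : ℂ) • vecMulVec (ketB y l) (star (ketB y l)) +
    (((1 - ε) / 3 : ℝ) : ℂ) • (1 : Matrix (Fin 3) (Fin 3) ℂ)

/-- The maximally entangled two-qutrit state (|00⟩+|11⟩+|22⟩)/√3. -/
def psiMES : Fin 3 × Fin 3 → ℂ :=
  fun q => if q.1 = q.2 then ((1 / Real.sqrt 3 : ℝ) : ℂ) else 0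

/-- Joint outcome probability P(a,b|x,y) for the MES. -/
def Pab (ε : ℝ) (a b : Fin 3) (x y : Fin 2) : ℝ :=
  (star psiMES ⬝ᵥ ((vecMulVec (ketA x a) (star (ketA x a)) ⊗ₖ Emeas ε y b) *ᵥ psiMES)).re

/-- P(A_x = B_y + k) = Σ_j P(a = j, b = (j - k) mod 3 | x, y). -/
def PS (ε : ℝ) (x y : Fin 2) (k : Fin 3) : ℝ := ∑ j : Fin 3, Pab ε j (j - k) x y

/-- P(B_y = A_x + k) = Σ_j P(a = (j - k) mod 3, b = j | x, y). -/
def PT (ε : ℝ) (x y : Fin 2) (k : Fin 3) : ℝ := ∑ j : Fin 3, Pab ε (j - k) j x y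


open Complex
open scoped Real

theorem normSq_one_add_exp_add_exp_sq (φ : ℝ) :
    normSq (1 + exp (φ * I) + exp (φ * I) ^ 2) = 3 + 4 * Real.cos φ + 2 * Real.cos (2 * φ) := by
  rw [← Complex.exp_nat_mul,
    show ((2 : ℕ) : ℂ) * (φ * I) = ((2 * φ : ℝ) : ℂ) * I by push_cast; ring, normSq_apply]
  simp only [add_re, add_im, one_re, one_im, exp_ofReal_mul_I_re, exp_ofReal_mul_I_im,
    Real.cos_two_mul, Real.sin_two_mul]
  linear_combination (1 + 2 * Real.cos φ) ^ 2 * Real.sin_sq_add_cos_sq φ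

theorem dotProduct_kronecker_mulVec_maxEntangled {ι : Type*} [Fintype ι] [DecidableEq ι]
    (c : ℂ) (A B : Matrix ι ι ℂ) :
    star (fun q : ι × ι => if q.1 = q.2 then c else 0) ⬝ᵥ
      ((A ⊗ₖ B) *ᵥ fun q : ι × ι => if q.1 = q.2 then c else 0)
      = star c * c * ∑ i, ∑ k, A i k * B i k := by
  simp only [dotProduct, mulVec, Fintype.sum_prod_type, Pi.star_apply, kroneckerMap_apply,
    apply_ite, mul_zero, star_zero, Finset.sum_ite_eq, Finset.mem_univ, if_true, ite_mul,
    zero_mul]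
  simp only [Finset.mul_sum]
  exact Finset.sum_congr rfl fun _ _ => Finset.sum_congr rfl fun _ _ => by ring

theorem sum_vecMulVec_mul_smul_vecMulVec_add_smul_one {ι : Type*} [Fintype ι] [DecidableEq ι]
    (u v : ι → ℂ) (s t : ℂ) :
    ∑ i, ∑ k, vecMulVec u (star u) i k * (s • vecMulVec v (star v) + t • 1) i k
      = s * normSq (u ⬝ᵥ v) + t * (u ⬝ᵥ star u) := by
  rw [← mul_conj]
  simp only [vecMulVec_apply, Matrix.add_apply, Matrix.smul_apply, smul_eq_mul, one_apply,
    mul_add, Finset.sum_add_distrib, mul_ite, mul_one, mul_zero, Finset.sum_ite_eq,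
    Finset.mem_univ, if_true, dotProduct, map_sum, map_mul, Pi.star_apply, RCLike.star_def]
  rw [Finset.sum_mul_sum]
  simp only [Finset.mul_sum]
  congr 1
  · exact Finset.sum_congr rfl fun _ _ => Finset.sum_congr rfl fun _ _ => by ring
  · exact Finset.sum_congr rfl fun _ _ => by ring

theorem Fin.exists_val_sub_eq {n : ℕ} (a b : Fin n) :
    ∃ m : ℤ, ((a - b : Fin n) : ℤ) = a - b + n * m := by
  refine ⟨1 - ((n - b + a) / n : ℕ), ?_⟩
  have hdiv := Nat.mod_add_div (n - b + a) n
  rw [Fin.val_sub]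
  zify [b.isLt.le] at hdiv ⊢
  linear_combination hdiv

def phaseKet (t : ℝ) : Fin 3 → ℂ :=
  fun j => ((1 / √3 : ℝ) : ℂ) * exp ((2 * π * t * j / 3 : ℝ) * I)

theorem ketA_eq_phaseKet (x : Fin 2) (k : Fin 3) : ketA x k = phaseKet (k + alphaA x) := by
  funext j
  simp only [ketA, phaseKet]
  congr 2
  push_cast
  ring

theorem ketB_eq_phaseKet (y : Fin 2) (l : Fin 3) : ketB y l = phaseKet (-l + betaB y) := by
  funext j
  simp only [ketB, phaseKet]
  congr 2
  push_cast
  ring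

theorem ofReal_one_div_sqrt_three_sq : ((1 / √3 : ℝ) : ℂ) ^ 2 = 3⁻¹ := by
  rw [← ofReal_pow, div_pow, Real.sq_sqrt (by norm_num)]
  norm_num

theorem phaseKet_dotProduct_phaseKet (s t : ℝ) :
    phaseKet s ⬝ᵥ phaseKet t = 3⁻¹ *
      (1 + exp ((2 * π * (s + t) / 3 : ℝ) * I) + exp ((2 * π * (s + t) / 3 : ℝ) * I) ^ 2) := by
  have hj (j : Fin 3) :
      phaseKet s j * phaseKet t j = 3⁻¹ * exp ((2 * π * (s + t) / 3 : ℝ) * I) ^ (j : ℕ) := by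
    rw [phaseKet, phaseKet, mul_mul_mul_comm, ← sq, ofReal_one_div_sqrt_three_sq, ← exp_add,
      ← Complex.exp_nat_mul]
    congr 2
    push_cast
    ring
  simp only [dotProduct, hj, Fin.sum_univ_three]
  simp only [Fin.val_zero, Fin.val_one, Fin.val_two, pow_zero, pow_one]
  ring

theorem phaseKet_dotProduct_star (t : ℝ) : phaseKet t ⬝ᵥ star (phaseKet t) = 1 := by
  have hj (j : Fin 3) : phaseKet t j * star (phaseKet t j) = 3⁻¹ := by
    rw [RCLike.star_def, mul_conj, phaseKet, normSq_mul, normSq_eq_norm_sq (exp _),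
      norm_exp_ofReal_mul_I, normSq_ofReal, ← sq, one_pow, mul_one, div_pow,
      Real.sq_sqrt (by norm_num)]
    norm_num
  simp only [dotProduct, Pi.star_apply, hj, Fin.sum_univ_three]
  norm_num

def cglmpProfile (θ : ℝ) : ℝ :=
  3 + 4 * Real.cos (2 * π * θ / 3) + 2 * Real.cos (2 * (2 * π * θ / 3))

theorem normSq_phaseKet_dotProduct_phaseKet (s t : ℝ) :
    normSq (phaseKet s ⬝ᵥ phaseKet t) = cglmpProfile (s + t) / 9 := by
  rw [phaseKet_dotProduct_phaseKet, normSq_mul, normSq_one_add_exp_add_exp_sq, cglmpProfile,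
    map_inv₀, normSq_ofNat]
  ring

theorem Pab_eq (ε : ℝ) (a b : Fin 3) (x y : Fin 2) :
    Pab ε a b x y = (1 - ε) / 9 + ε / 27 * cglmpProfile (a + alphaA x - b + betaB y) := by
  unfold Pab psiMES Emeas
  rw [dotProduct_kronecker_mulVec_maxEntangled, sum_vecMulVec_mul_smul_vecMulVec_add_smul_one,
    ketA_eq_phaseKet, ketB_eq_phaseKet, normSq_phaseKet_dotProduct_phaseKet,
    phaseKet_dotProduct_star, RCLike.star_def, conj_ofReal, ← sq, ofReal_one_div_sqrt_three_sq,
    ← add_assoc, ← sub_eq_add_neg]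
  simp only [mul_re, add_re, inv_re, inv_im, ofReal_re, ofReal_im, re_ofNat, im_ofNat, one_re,
    one_im, normSq_ofNat]
  ring

theorem cglmpProfile_add_int_mul_three (θ : ℝ) (m : ℤ) :
    cglmpProfile (θ + 3 * m) = cglmpProfile θ := by
  have h₁ : 2 * π * (θ + 3 * m) / 3 = 2 * π * θ / 3 + m * (2 * π) := by ring
  have h₂ : 2 * (2 * π * θ / 3 + m * (2 * π)) = 2 * (2 * π * θ / 3) + (2 * m : ℤ) * (2 * π) := by
    push_cast; ring
  rw [cglmpProfile, cglmpProfile, h₁, h₂, Real.cos_add_int_mul_two_pi, Real.cos_add_int_mul_two_pi]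

theorem cglmpProfile_neg (θ : ℝ) : cglmpProfile (-θ) = cglmpProfile θ := by
  simp only [cglmpProfile, mul_neg, neg_div, Real.cos_neg]

theorem cglmpProfile_one_fourth : cglmpProfile (1 / 4) = 4 + 2 * √3 := by
  rw [cglmpProfile, show 2 * π * (1 / 4) / 3 = π / 6 by ring, show 2 * (π / 6) = π / 3 by ring,
    Real.cos_pi_div_six, Real.cos_pi_div_three]
  ring

theorem cglmpProfile_three_fourths : cglmpProfile (3 / 4) = 1 := by
  rw [cglmpProfile, show 2 * π * (3 / 4) / 3 = π / 2 by ring, show 2 * (π / 2) = π by ring,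
    Real.cos_pi_div_two, Real.cos_pi]
  ring

theorem cglmpProfile_nine_fourths : cglmpProfile (9 / 4) = 1 := by
  rw [show (9 / 4 : ℝ) = -(3 / 4) + 3 * (1 : ℤ) by norm_num, cglmpProfile_add_int_mul_three,
    cglmpProfile_neg, cglmpProfile_three_fourths]

theorem PS_eq (ε : ℝ) (x y : Fin 2) (k : Fin 3) :
    PS ε x y k = (1 - ε) / 3 + ε / 9 * cglmpProfile (k + alphaA x + betaB y) := by
  have hj (j : Fin 3) :
      Pab ε j (j - k) x y = (1 - ε) / 9 + ε / 27 * cglmpProfile (k + alphaA x + betaB y) := by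
    obtain ⟨m, hm⟩ := Fin.exists_val_sub_eq j k
    have hm' : ((j - k : Fin 3) : ℝ) = j - k + 3 * m := by exact_mod_cast hm
    rw [Pab_eq, hm', ← cglmpProfile_add_int_mul_three _ m]
    ring_nf
  simp only [PS, hj, Finset.sum_const, Finset.card_univ, Fintype.card_fin, nsmul_eq_mul]
  ring

theorem PT_eq (ε : ℝ) (x y : Fin 2) (k : Fin 3) :
    PT ε x y k = (1 - ε) / 3 + ε / 9 * cglmpProfile (-k + alphaA x + betaB y) := by
  have hj (j : Fin 3) :
      Pab ε (j - k) j x y = (1 - ε) / 9 + ε / 27 * cglmpProfile (-k + alphaA x + betaB y) := by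
    obtain ⟨m, hm⟩ := Fin.exists_val_sub_eq j k
    have hm' : ((j - k : Fin 3) : ℝ) = j - k + 3 * m := by exact_mod_cast hm
    rw [Pab_eq, hm', ← cglmpProfile_add_int_mul_three _ (-m)]
    push_cast
    ring_nf
  simp only [PT, hj, Finset.sum_const, Finset.card_univ, Fintype.card_fin, nsmul_eq_mul]
  ring

theorem stmt9_general (ε : ℝ) :
    PS ε 0 0 0 + PT ε 1 0 1 + PS ε 1 1 0 + PT ε 0 1 0
      - PS ε 0 0 2 - PT ε 1 0 0 - PS ε 1 1 2 - PT ε 0 1 2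
    = 4 / 9 * (3 + 2 * Real.sqrt 3) * ε := by
  simp only [PS_eq, PT_eq]
  norm_num [alphaA, betaB, cglmpProfile_neg, cglmpProfile_one_fourth,
    cglmpProfile_three_fourths, cglmpProfile_nine_fourths]
  ring

/-- for the maximally entangled state with the CGLMP measurements
and Bob's noisy operators, the CGLMP expression evaluates to (4/9)(3+2√3)ε. -/
theorem stmt9 (ε : ℝ) (hε0 : 0 ≤ ε) (hε1 : ε ≤ 1) :
    PS ε 0 0 0 + PT ε 1 0 1 + PS ε 1 1 0 + PT ε 0 1 0
      - PS ε 0 0 2 - PT ε 1 0 0 - PS ε 1 1 2 - PT ε 0 1 2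
    = 4 / 9 * (3 + 2 * Real.sqrt 3) * ε :=
  stmt9_general ε

end
end
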